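/- arXiv:1805.02848 — 3 statements merged into one kernel-verified Lean document; each statement's English description precedes it below -/
import Mathlib

section
/- Let p be a probability mass function on the nonnegative integers that follows GHD(a, b, θ) with positive parameters a = (a_1, …, a_P), b = (b_1, …, b_Q) and θ > 0. Then for every positive integer r, the r-th factorial moment of p satisfies ∑_{k≥0} (k)_r · p(k) = θ^r · (∏_{i=1}^P ⟨a_i⟩^r) / (∏_{l=1}^Q ⟨b_l⟩^r), with the series on the left converging. -/
/-- The rising factorial `⟨a⟩^j = a (a+1) ⋯ (a+j-1)`. -/
noncomputable def risingFact (a : ℝ) (j : ℕ) : ℝ := ∏ i ∈ Finset.range j, (a + i)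

/-- The `j`-th term of the generalized hypergeometric series
`(∏ᵢ ⟨aᵢ⟩^j / ∏ₗ ⟨bₗ⟩^j) · (θ(s-1))^j / j!`. -/
noncomputable def ghdSeries {P Q : ℕ} (a : Fin P → ℝ) (b : Fin Q → ℝ) (θ s : ℝ) (j : ℕ) : ℝ :=
  ((∏ i, risingFact (a i) j) / (∏ l, risingFact (b l) j)) * (θ * (s - 1)) ^ j / (j.factorial : ℝ)

/-- A probability mass function `p` on `ℕ` follows the generalized hypergeometric
distribution `GHD(a, b, θ)` if there is some `ρ > 1` such that for every `s` with `|s| < ρ`,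
both the probability generating series and the generalized hypergeometric series converge and
`∑ₖ p(k) sᵏ = ∑ⱼ (∏ᵢ ⟨aᵢ⟩^j / ∏ₗ ⟨bₗ⟩^j) (θ(s-1))^j / j!`. -/
def IsGHD {P Q : ℕ} (a : Fin P → ℝ) (b : Fin Q → ℝ) (θ : ℝ) (p : ℕ → ℝ) : Prop :=
  (∀ k, 0 ≤ p k) ∧ Summable p ∧ (∑' k, p k) = 1 ∧
    ∃ ρ : ℝ, 1 < ρ ∧ ∀ s : ℝ, |s| < ρ →
      Summable (fun k => p k * s ^ k) ∧
      Summable (fun j => ghdSeries a b θ s j) ∧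
      (∑' k, p k * s ^ k) = ∑' j, ghdSeries a b θ s j

/-!
Put `s = 1 + t`. Since `p ≥ 0`, the double series `∑ₖ ∑ₘ C(k,m) p(k) tᵐ` converges absolutely
for `|t| < ρ - 1`, so the probability generating function, expanded around `s = 1` by the
binomial theorem, is the power series in `t` whose coefficients are the binomial moments
`∑ₖ C(k,m) p(k)`. The GHD series is a power series in `t = s - 1` as well, so by uniqueness of
power series coefficients the `r`-th binomial moment is `θʳ ∏ ⟨aᵢ⟩ʳ / (∏ ⟨bₗ⟩ʳ r!)`, and
`(k)ᵣ = r! C(k,r)`.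
-/

open FormalMultilinearSeries in
theorem hasFPowerSeriesOnBall_ofScalars_of_hasSum {c : ℕ → ℝ} {f : ℝ → ℝ} {ε : ℝ} (hε : 0 < ε)
    (hf : ∀ t : ℝ, |t| < ε → HasSum (fun n => c n * t ^ n) (f t)) :
    HasFPowerSeriesOnBall f (ofScalars ℝ c) 0 (ENNReal.ofReal ε) where
  r_le := by
    refine ENNReal.le_of_forall_nnreal_lt fun r hr => le_radius_of_summable_norm _ ?_
    have hrε : |(r : ℝ)| < ε := by
      rwa [abs_of_nonneg r.coe_nonneg, ← ENNReal.ofReal_lt_ofReal_iff hε,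
        ENNReal.ofReal_coe_nnreal]
    refine (hf r hrε).summable.abs.congr fun n => ?_
    rw [ofScalars_norm, abs_mul, Real.norm_eq_abs, abs_pow, abs_of_nonneg r.coe_nonneg]
  r_pos := by simpa using hε
  hasSum {t} ht := by
    have htε : |t| < ε := by
      rwa [mem_eball_zero_iff, ← ofReal_norm, ENNReal.ofReal_lt_ofReal_iff hε] at ht
    simpa only [ofScalars_apply_eq, smul_eq_mul, zero_add] using hf t htε

theorem eq_of_hasSum_mul_pow {c d : ℕ → ℝ} {f : ℝ → ℝ} {ε : ℝ} (hε : 0 < ε)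
    (hc : ∀ t : ℝ, |t| < ε → HasSum (fun n => c n * t ^ n) (f t))
    (hd : ∀ t : ℝ, |t| < ε → HasSum (fun n => d n * t ^ n) (f t)) : c = d :=
  FormalMultilinearSeries.ofScalars_series_injective ℝ ℝ <|
    (hasFPowerSeriesOnBall_ofScalars_of_hasSum hε hc).hasFPowerSeriesAt.eq_formalMultilinearSeries
      (hasFPowerSeriesOnBall_ofScalars_of_hasSum hε hd).hasFPowerSeriesAt

theorem hasSum_choose_mul_pow {R : Type*} [CommSemiring R] [TopologicalSpace R] (k : ℕ) (x : R) :
    HasSum (fun m => (k.choose m : R) * x ^ m) ((1 + x) ^ k) := by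
  have h : HasSum (fun m => (k.choose m : R) * x ^ m)
      (∑ m ∈ Finset.range (k + 1), (k.choose m : R) * x ^ m) :=
    hasSum_sum_of_ne_finset_zero fun m hm => by
      rw [Finset.mem_range, not_lt] at hm
      simp [Nat.choose_eq_zero_of_lt hm]
  rw [add_comm, add_pow]
  simpa only [one_pow, mul_one, mul_comm] using h

theorem hasSum_choose_mul_mul_pow {R : Type*} [CommSemiring R] [TopologicalSpace R]
    [IsTopologicalSemiring R] (k : ℕ) (y x : R) :
    HasSum (fun m => (k.choose m : R) * y * x ^ m) (y * (1 + x) ^ k) := by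
  simpa only [mul_left_comm, mul_assoc] using (hasSum_choose_mul_pow k x).mul_left y

noncomputable def binomialMoment (p : ℕ → ℝ) (m : ℕ) : ℝ := ∑' k, (k.choose m : ℝ) * p k

section BinomialMoment

variable {p : ℕ → ℝ}

theorem summable_choose_mul (hp : ∀ k, 0 ≤ p k) {t : ℝ} (ht : 0 < t)
    (hsum : Summable fun k => p k * (1 + t) ^ k) (m : ℕ) :
    Summable fun k => (k.choose m : ℝ) * p k := by
  refine (hsum.div_const (t ^ m)).of_nonneg_of_le
    (fun k => mul_nonneg (Nat.cast_nonneg _) (hp k)) fun k => ?_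
  rw [le_div_iff₀ (by positivity)]
  exact le_hasSum (hasSum_choose_mul_mul_pow k (p k) t) m fun j _ =>
    mul_nonneg (mul_nonneg (Nat.cast_nonneg _) (hp k)) (by positivity)

theorem summable_choose_mul_mul_pow (hp : ∀ k, 0 ≤ p k) {t : ℝ}
    (hsum : Summable fun k => p k * (1 + |t|) ^ k) :
    Summable fun km : ℕ × ℕ => (km.1.choose km.2 : ℝ) * p km.1 * t ^ km.2 := by
  refine Summable.of_norm ?_
  simp only [norm_mul, norm_pow, Real.norm_eq_abs, Nat.abs_cast, abs_of_nonneg (hp _)]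
  refine (summable_prod_of_nonneg fun km => ?_).2
    ⟨fun k => (hasSum_choose_mul_mul_pow k (p k) |t|).summable, ?_⟩
  · exact mul_nonneg (mul_nonneg (Nat.cast_nonneg _) (hp _)) (by positivity)
  · simpa only [(hasSum_choose_mul_mul_pow _ _ _).tsum_eq] using hsum

theorem hasSum_binomialMoment_mul_pow (hp : ∀ k, 0 ≤ p k) {t : ℝ}
    (hsum : Summable fun k => p k * (1 + |t|) ^ k) :
    HasSum (fun m => binomialMoment p m * t ^ m) (∑' k, p k * (1 + t) ^ k) := by
  have hF := summable_choose_mul_mul_pow hp hsum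
  have hrows := hF.hasSum.prod_fiberwise fun k => hasSum_choose_mul_mul_pow k (p k) t
  rw [hrows.tsum_eq]
  refine ((Equiv.prodComm ℕ ℕ).hasSum_iff.2 hF.hasSum).prod_fiberwise fun m => ?_
  simpa only [Function.comp_def, Equiv.prodComm_apply, Prod.swap, binomialMoment,
    tsum_mul_right] using (hF.prod_symm.prod_factor m).hasSum

theorem hasSum_descFactorial_mul {r : ℕ}
    (h : Summable fun k => (k.choose r : ℝ) * p k) :
    HasSum (fun k => (k.descFactorial r : ℝ) * p k) (r.factorial * binomialMoment p r) := by
  simpa only [Nat.descFactorial_eq_factorial_mul_choose, Nat.cast_mul, mul_assoc, binomialMoment]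
    using h.hasSum.mul_left (r.factorial : ℝ)

end BinomialMoment

noncomputable def ghdCoeff {P Q : ℕ} (a : Fin P → ℝ) (b : Fin Q → ℝ) (θ : ℝ) (j : ℕ) : ℝ :=
  (∏ i, risingFact (a i) j) / (∏ l, risingFact (b l) j) * θ ^ j / j.factorial

theorem ghdSeries_one_add {P Q : ℕ} (a : Fin P → ℝ) (b : Fin Q → ℝ) (θ t : ℝ) (j : ℕ) :
    ghdSeries a b θ (1 + t) j = ghdCoeff a b θ j * t ^ j := by
  rw [ghdSeries, ghdCoeff, add_sub_cancel_left, mul_pow]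
  ring

theorem ghd_factorial_moment_general {P Q : ℕ} (a : Fin P → ℝ) (b : Fin Q → ℝ) (θ : ℝ)
    (p : ℕ → ℝ) (hp : IsGHD a b θ p) (r : ℕ) :
    Summable (fun k => (k.descFactorial r : ℝ) * p k) ∧
      (∑' k, (k.descFactorial r : ℝ) * p k)
        = θ ^ r * (∏ i, risingFact (a i) r) / (∏ l, risingFact (b l) r) := by
  obtain ⟨hp0, -, -, ρ, hρ, hpgf⟩ := hp
  have hpgf_one_add : ∀ t : ℝ, 0 ≤ t → t < ρ - 1 → Summable fun k => p k * (1 + t) ^ k :=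
    fun t ht0 ht => (hpgf _ (by rw [abs_of_nonneg (by linarith)]; linarith)).1
  have hmoment : binomialMoment p = ghdCoeff a b θ := by
    refine eq_of_hasSum_mul_pow (sub_pos.2 hρ) (fun t ht =>
      hasSum_binomialMoment_mul_pow hp0 (hpgf_one_add |t| (abs_nonneg t) ht)) fun t ht => ?_
    obtain ⟨-, hsum, heq⟩ := hpgf (1 + t) ((abs_add_le 1 t).trans_lt (by rw [abs_one]; linarith))
    rw [heq]
    simpa only [ghdSeries_one_add] using hsum.hasSum
  have hchoose : Summable fun k => (k.choose r : ℝ) * p k := by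
    refine summable_choose_mul hp0 (t := (ρ - 1) / 2) (by linarith) (hpgf_one_add _ ?_ ?_) r <;>
      linarith
  have hfact := hasSum_descFactorial_mul hchoose
  refine ⟨hfact.summable, ?_⟩
  rw [hfact.tsum_eq, hmoment, ghdCoeff]
  field_simp

/-- If `p` follows `GHD(a, b, θ)` with positive parameters, then for every
positive integer `r`, the `r`-th factorial moment of `p` satisfies
`∑ₖ (k)ᵣ · p(k) = θ^r · (∏ᵢ ⟨aᵢ⟩^r) / (∏ₗ ⟨bₗ⟩^r)`, the series converging. -/
theorem ghd_factorial_moment {P Q : ℕ} (a : Fin P → ℝ) (b : Fin Q → ℝ) (θ : ℝ)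
    (ha : ∀ i, 0 < a i) (hb : ∀ l, 0 < b l) (hθ : 0 < θ)
    (p : ℕ → ℝ) (hp : IsGHD a b θ p) (r : ℕ) (hr : 0 < r) :
    Summable (fun k => (k.descFactorial r : ℝ) * p k) ∧
      (∑' k, (k.descFactorial r : ℝ) * p k)
        = θ ^ r * (∏ i, risingFact (a i) r) / (∏ l, risingFact (b l) r) :=
  ghd_factorial_moment_general a b θ p hp r
end

section
/- (Identifiability of the effect node in a Poisson DAG, case G2.) Let μ be a probability mass function on a countable set Z, let θ : Z → (0, ∞), and let p be the associated mixed-Poisson probability mass function. Let r ≥ 2 be an integer with ∑_{z∈Z} μ(z) θ(z)^r < ∞, and suppose θ is non-degenerate on the support of μ, i.e. there exist z, z′ ∈ Z with μ(z) > 0, μ(z′) > 0 and θ(z) ≠ θ(z′). Then the r-th factorial moment of p strictly exceeds the r-th power of its mean: ∑_{k≥0} (k)_r · p(k) > (∑_{k≥0} k · p(k))^r. -/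
/-- The mixed-Poisson probability mass function on `ℕ` associated to a mixing pmf `μ`
on a countable set `Z` and a rate function `θ : Z → (0, ∞)`:
`p(k) = ∑_z μ(z) · e^{−θ(z)} θ(z)^k / k!`. -/
noncomputable def mixedPoisson {Z : Type*} (μ : Z → ℝ) (θ : Z → ℝ) (k : ℕ) : ℝ :=
  ∑' z, μ z * (Real.exp (-θ z) * θ z ^ k / (k.factorial : ℝ))

namespace MixedPoissonAux

/-- The `k`-th term of the Poisson factorial-moment series with rate `t`. -/
noncomputable def pf (t : ℝ) (r : ℕ) : ℕ → ℝ :=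
  fun k => (k.descFactorial r : ℝ) * (Real.exp (-t) * t ^ k / k.factorial)

lemma pf_nonneg {t : ℝ} (ht : 0 ≤ t) (r k : ℕ) : 0 ≤ pf t r k := by
  unfold pf; positivity

lemma pf_zero (t : ℝ) (r : ℕ) : ∀ k ∉ Set.range (fun j : ℕ => j + r), pf t r k = 0 := by
  intro k hk
  have hklt : k < r := by
    by_contra h
    exact hk ⟨k - r, by simp; omega⟩
  simp [pf, Nat.descFactorial_eq_zero_iff_lt.2 hklt]

lemma pf_comp (t : ℝ) (r : ℕ) :
    ∀ j : ℕ, pf t r (j + r) = (Real.exp (-t) * t ^ r) * (t ^ j / j.factorial) := by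
  intro j
  have hj : (j.factorial : ℝ) ≠ 0 := by positivity
  have hfac : ((j + r).descFactorial r : ℝ) = ((j + r).factorial : ℝ) / (j.factorial : ℝ) := by
    rw [eq_div_iff hj]
    rw [← Nat.cast_mul]
    norm_cast
    rw [mul_comm]
    have := Nat.factorial_mul_descFactorial (show r ≤ j + r by omega)
    simpa using this
  have hjr : ((j + r).factorial : ℝ) ≠ 0 := by positivity
  rw [pf, hfac, pow_add]
  field_simp

lemma pf_summable (t : ℝ) (r : ℕ) : Summable (pf t r) := by
  have hinj : Function.Injective (fun j : ℕ => j + r) := add_left_injective r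
  rw [← hinj.summable_iff (pf_zero t r)]
  simp only [Function.comp_def, pf_comp]
  exact (Real.summable_pow_div_factorial t).mul_left _

lemma pf_tsum (t : ℝ) (r : ℕ) : ∑' k : ℕ, pf t r k = t ^ r := by
  have hinj : Function.Injective (fun j : ℕ => j + r) := add_left_injective r
  have hsupp : Function.support (pf t r) ⊆ Set.range (fun j : ℕ => j + r) := by
    intro k hk
    by_contra h
    exact hk (pf_zero t r k h)
  rw [← hinj.tsum_eq hsupp]
  simp only [pf_comp]
  rw [tsum_mul_left]
  have h1 : ∑' j : ℕ, t ^ j / (j.factorial : ℝ) = Real.exp t := by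
    rw [Real.exp_eq_exp_ℝ, NormedSpace.exp_eq_tsum_div]
  rw [h1, show Real.exp (-t) * t ^ r * Real.exp t
      = (Real.exp (-t) * Real.exp t) * t ^ r by ring, ← Real.exp_add]
  simp

/-- Tangent-line strict inequality for `x ^ r` at `m`. -/
lemma tangent_lt {x m : ℝ} (hx : 0 ≤ x) (hm : 0 ≤ m) {r : ℕ} (hr : 2 ≤ r) (hne : x ≠ m) :
    m ^ r + r * m ^ (r - 1) * (x - m) < x ^ r := by
  have hkey : (x ^ r - m ^ r) - (r : ℝ) * m ^ (r - 1) * (x - m)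
      = (∑ i ∈ Finset.range r, (x ^ i - m ^ i) * m ^ (r - 1 - i)) * (x - m) := by
    rw [Finset.sum_mul]
    have h1 : ∑ i ∈ Finset.range r, (x ^ i - m ^ i) * m ^ (r - 1 - i) * (x - m)
        = ∑ i ∈ Finset.range r, (x ^ i * m ^ (r - 1 - i) * (x - m)
            - m ^ (r - 1) * (x - m)) := by
      apply Finset.sum_congr rfl
      intro i hi
      have h2 : m ^ i * m ^ (r - 1 - i) = m ^ (r - 1) := by
        rw [← pow_add]
        congr 1
        simp at hi
        omega
      nlinarith [h2]
    rw [h1, Finset.sum_sub_distrib, Finset.sum_const, Finset.card_range, ← Finset.sum_mul,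
      geom_sum₂_mul]
    ring
  have hrm : r - 1 ∈ Finset.range r := by simp; omega
  have hr1 : r - 1 ≠ 0 := by omega
  have hS : 0 < (∑ i ∈ Finset.range r, (x ^ i - m ^ i) * m ^ (r - 1 - i)) * (x - m) := by
    rcases hne.lt_or_gt with hlt | hlt
    · have hSneg : 0 < ∑ i ∈ Finset.range r, -((x ^ i - m ^ i) * m ^ (r - 1 - i)) := by
        apply Finset.sum_pos'
        · intro i _
          have h3 : x ^ i ≤ m ^ i := pow_le_pow_left₀ hx hlt.le i
          have h4 : (0:ℝ) ≤ m ^ (r - 1 - i) := pow_nonneg hm _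
          nlinarith
        · refine ⟨r - 1, hrm, ?_⟩
          have h3 : x ^ (r - 1) < m ^ (r - 1) := pow_lt_pow_left₀ hlt hx hr1
          simp only [Nat.sub_self, pow_zero]
          nlinarith
      rw [Finset.sum_neg_distrib] at hSneg
      exact mul_pos_of_neg_of_neg (by linarith) (by linarith)
    · have hSpos : 0 < ∑ i ∈ Finset.range r, (x ^ i - m ^ i) * m ^ (r - 1 - i) := by
        apply Finset.sum_pos'
        · intro i _
          have h3 : m ^ i ≤ x ^ i := pow_le_pow_left₀ hm hlt.le i
          have h4 : (0:ℝ) ≤ m ^ (r - 1 - i) := pow_nonneg hm _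
          nlinarith
        · refine ⟨r - 1, hrm, ?_⟩
          have h3 : m ^ (r - 1) < x ^ (r - 1) := pow_lt_pow_left₀ hlt hm hr1
          simp only [Nat.sub_self, pow_zero]
          nlinarith
      exact mul_pos hSpos (by linarith)
  linarith [hkey, hS]

/-- The `s`-th factorial moment of a mixed-Poisson pmf equals the mixed `s`-th power moment. -/
lemma factorial_moment_eq {Z : Type*} [Countable Z]
    (μ : Z → ℝ) (hμ : ∀ z, 0 ≤ μ z)
    (θ : Z → ℝ) (hθ : ∀ z, 0 < θ z)
    (s : ℕ) (hs : Summable (fun z => μ z * θ z ^ s)) :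
    ∑' k : ℕ, (k.descFactorial s : ℝ) * mixedPoisson μ θ k = ∑' z, μ z * θ z ^ s := by
  have hslice : ∀ z, Summable (fun k : ℕ => μ z * pf (θ z) s k) :=
    fun z => (pf_summable (θ z) s).mul_left _
  have hslice_sum : ∀ z, ∑' k : ℕ, μ z * pf (θ z) s k = μ z * θ z ^ s := by
    intro z
    rw [tsum_mul_left, pf_tsum]
  have hG : Summable (Function.uncurry (fun z (k : ℕ) => μ z * pf (θ z) s k)) := by
    rw [summable_prod_of_nonneg]
    · constructor
      · exact hslice
      · exact hs.congr (fun z => (hslice_sum z).symm)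
    · intro p
      exact mul_nonneg (hμ p.1) (pf_nonneg (hθ p.1).le s p.2)
  have hterm : ∀ k : ℕ, (k.descFactorial s : ℝ) * mixedPoisson μ θ k
      = ∑' z, μ z * pf (θ z) s k := by
    intro k
    rw [mixedPoisson, ← tsum_mul_left]
    congr 1
    ext z
    rw [pf]
    ring
  calc ∑' k : ℕ, (k.descFactorial s : ℝ) * mixedPoisson μ θ k
      = ∑' (k : ℕ) (z : Z), μ z * pf (θ z) s k := by
        exact tsum_congr hterm
    _ = ∑' (z : Z) (k : ℕ), μ z * pf (θ z) s k := Summable.tsum_comm hG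
    _ = ∑' z, μ z * θ z ^ s := tsum_congr hslice_sum

end MixedPoissonAux

open MixedPoissonAux in
/-- **identifiability of the effect node in a Poisson DAG, case G2.** -/
theorem mixedPoisson_overdispersed {Z : Type*} [Countable Z]
    (μ : Z → ℝ) (hμ : ∀ z, 0 ≤ μ z) (hμsum : Summable μ) (hμ1 : (∑' z, μ z) = 1)
    (θ : Z → ℝ) (hθ : ∀ z, 0 < θ z)
    (r : ℕ) (hr : 2 ≤ r) (hmom : Summable (fun z => μ z * θ z ^ r))
    (hnd : ∃ z z' : Z, 0 < μ z ∧ 0 < μ z' ∧ θ z ≠ θ z') :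
    (∑' k : ℕ, (k.descFactorial r : ℝ) * mixedPoisson μ θ k)
      > (∑' k : ℕ, (k : ℝ) * mixedPoisson μ θ k) ^ r := by
  -- summability of the first moment
  have hμθ : Summable (fun z => μ z * θ z) := by
    refine Summable.of_nonneg_of_le (f := fun z => μ z + μ z * θ z ^ r)
        (fun z => mul_nonneg (hμ z) (hθ z).le) ?_ (hμsum.add hmom)
    intro z
    have hb : θ z ≤ 1 + θ z ^ r := by
      rcases le_or_gt (θ z) 1 with h | h
      · have : (0:ℝ) ≤ θ z ^ r := pow_nonneg (hθ z).le r
        linarith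
      · have : θ z ≤ θ z ^ r := le_self_pow₀ h.le (by omega)
        linarith
    show μ z * θ z ≤ μ z + μ z * θ z ^ r
    nlinarith [hμ z, hb]
  have hμθ1 : Summable (fun z => μ z * θ z ^ 1) := by simpa using hμθ
  -- identify both sides
  have hR : (∑' k : ℕ, (k.descFactorial r : ℝ) * mixedPoisson μ θ k) = ∑' z, μ z * θ z ^ r :=
    factorial_moment_eq μ hμ θ hθ r hmom
  have hM : (∑' k : ℕ, (k : ℝ) * mixedPoisson μ θ k) = ∑' z, μ z * θ z := by
    have h1 := factorial_moment_eq μ hμ θ hθ 1 hμθ1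
    simp only [Nat.descFactorial_one, pow_one] at h1
    exact h1
  rw [hR, hM]
  set m : ℝ := ∑' z, μ z * θ z with hm
  have hm0 : 0 ≤ m := tsum_nonneg (fun z => mul_nonneg (hμ z) (hθ z).le)
  -- the strict Jensen gap
  set h : Z → ℝ := fun z => μ z * (θ z ^ r - m ^ r - r * m ^ (r - 1) * (θ z - m)) with hh
  have hhsum : Summable h := by
    have heq : h = fun z => μ z * θ z ^ r -
        ((m ^ r - (r : ℝ) * m ^ (r - 1) * m) * μ z + ((r : ℝ) * m ^ (r - 1)) * (μ z * θ z)) := by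
      ext z
      simp only [hh]
      ring
    rw [heq]
    exact hmom.sub ((hμsum.mul_left _).add (hμθ.mul_left _))
  have hhnonneg : ∀ z, 0 ≤ h z := by
    intro z
    apply mul_nonneg (hμ z)
    rcases eq_or_ne (θ z) m with hzm | hzm
    · rw [hzm]; ring_nf; simp
    · have := tangent_lt (hθ z).le hm0 hr hzm
      linarith
  obtain ⟨z1, z2, hz1, hz2, hz12⟩ := hnd
  have hwit : ∃ z0, 0 < μ z0 ∧ θ z0 ≠ m := by
    rcases eq_or_ne (θ z1) m with h1 | h1
    · exact ⟨z2, hz2, fun h2 => hz12 (h1.trans h2.symm)⟩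
    · exact ⟨z1, hz1, h1⟩
  obtain ⟨z0, hz0, hz0m⟩ := hwit
  have hpos : 0 < h z0 := by
    apply mul_pos hz0
    have := tangent_lt (hθ z0).le hm0 hr hz0m
    linarith
  have htsum_pos : 0 < ∑' z, h z := Summable.tsum_pos hhsum hhnonneg z0 hpos
  -- evaluate the gap
  have htsum_eq : ∑' z, h z = (∑' z, μ z * θ z ^ r) - m ^ r := by
    have heq : h = fun z => μ z * θ z ^ r -
        ((m ^ r - (r : ℝ) * m ^ (r - 1) * m) * μ z + ((r : ℝ) * m ^ (r - 1)) * (μ z * θ z)) := by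
      ext z
      simp only [hh]
      ring
    rw [heq, Summable.tsum_sub hmom ((hμsum.mul_left _).add (hμθ.mul_left _)),
      Summable.tsum_add (hμsum.mul_left _) (hμθ.mul_left _), tsum_mul_left, tsum_mul_left, hμ1, ← hm]
    ring
  rw [htsum_eq] at htsum_pos
  linarith
end

section
/- (Identifiability of bivariate Poisson DAG models.) For λ_1, λ_2 > 0 and functions θ_1, θ_2 : ℕ → (0, ∞), define three joint probability mass functions on ℕ × ℕ: P_{G1}(λ_1, λ_2)(j, k) = Pois(λ_1)(j) · Pois(λ_2)(k); P_{G2}(λ_1, θ_2)(j, k) = Pois(λ_1)(j) · Pois(θ_2(j))(k); P_{G3}(λ_2, θ_1)(j, k) = Pois(θ_1(k))(j) · Pois(λ_2)(k). Suppose θ_2 is non-constant, θ_1 is non-constant, ∑_{j≥0} Pois(λ_1)(j) θ_2(j)^2 < ∞, and ∑_{k≥0} Pois(λ_2)(k) θ_1(k)^2 < ∞. Then the three joint laws are pairwise distinct: P_{G2}(λ_1, θ_2) ≠ P_{G1}(λ_1′, λ_2′) for all λ_1′, λ_2′ > 0; P_{G3}(λ_2, θ_1) ≠ P_{G1}(λ_1′,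 λ_2′) for all λ_1′, λ_2′ > 0; and P_{G2}(λ_1, θ_2) ≠ P_{G3}(λ_2, θ_1). -/
/-- The Poisson(`λ`) probability mass function on `ℕ`: `k ↦ e^{−λ} λ^k / k!`. -/
noncomputable def pois (lam : ℝ) (k : ℕ) : ℝ := Real.exp (-lam) * lam ^ k / (k.factorial : ℝ)

/-- Joint pmf for the empty bivariate DAG `G1`: `X₁ ~ Pois(λ₁)` and `X₂ ~ Pois(λ₂)`
independent. -/
noncomputable def jointG1 (lam1 lam2 : ℝ) (jk : ℕ × ℕ) : ℝ := pois lam1 jk.1 * pois lam2 jk.2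

/-- Joint pmf for the DAG `G2 : X₁ → X₂`: `X₁ ~ Pois(λ₁)`, `X₂ ∣ X₁ ~ Pois(θ₂(X₁))`. -/
noncomputable def jointG2 (lam1 : ℝ) (θ2 : ℕ → ℝ) (jk : ℕ × ℕ) : ℝ :=
  pois lam1 jk.1 * pois (θ2 jk.1) jk.2

/-- Joint pmf for the DAG `G3 : X₂ → X₁`: `X₂ ~ Pois(λ₂)`, `X₁ ∣ X₂ ~ Pois(θ₁(X₂))`. -/
noncomputable def jointG3 (lam2 : ℝ) (θ1 : ℕ → ℝ) (jk : ℕ × ℕ) : ℝ :=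
  pois (θ1 jk.2) jk.1 * pois lam2 jk.2

lemma pois_pos {lam : ℝ} (h : 0 < lam) (k : ℕ) : 0 < pois lam k := by
  unfold pois
  positivity

lemma pois_zero (lam : ℝ) : pois lam 0 = Real.exp (-lam) := by simp [pois]

lemma pois_one (lam : ℝ) : pois lam 1 = pois lam 0 * lam := by simp [pois]

lemma pois_two (lam : ℝ) : pois lam 2 = Real.exp (-lam) * lam ^ 2 / 2 := by
  simp [pois]

/-- Key cancellation lemma: if the joint factorizes two ways then `f` is constant. -/
lemma aux1 {lam a b : ℝ} {f : ℕ → ℝ} (hlam : 0 < lam) (hf : ∀ j, 0 < f j)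
    (h : ∀ j k, pois lam j * pois (f j) k = pois a j * pois b k) : ∀ j, f j = b := by
  intro j
  have h0 := h j 0
  have h1 := h j 1
  rw [pois_one, pois_one] at h1
  have hpos : 0 < pois lam j * pois (f j) 0 := by
    have := pois_pos hlam j
    have := pois_pos (hf j) 0
    positivity
  have : pois lam j * pois (f j) 0 * f j = pois lam j * pois (f j) 0 * b := by
    linear_combination h1 - b * h0
  exact mul_left_cancel₀ (ne_of_gt hpos) this

/-- **identifiability of bivariate Poisson DAG models.** If `θ₂` and `θ₁` are
non-constant and the mixed second moments are finite, the three joint laws `G1`, `G2`, `G3`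
are pairwise distinct. -/
theorem bivariate_poisson_dag_identifiable
    (lam1 lam2 : ℝ) (hlam1 : 0 < lam1) (hlam2 : 0 < lam2)
    (θ1 θ2 : ℕ → ℝ) (hθ1 : ∀ k, 0 < θ1 k) (hθ2 : ∀ j, 0 < θ2 j)
    (hθ2nc : ∃ j j' : ℕ, θ2 j ≠ θ2 j') (hθ1nc : ∃ k k' : ℕ, θ1 k ≠ θ1 k')
    (hsum2 : Summable (fun j : ℕ => pois lam1 j * θ2 j ^ 2))
    (hsum1 : Summable (fun k : ℕ => pois lam2 k * θ1 k ^ 2)) :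
    (∀ lam1' lam2' : ℝ, 0 < lam1' → 0 < lam2' → jointG2 lam1 θ2 ≠ jointG1 lam1' lam2') ∧
    (∀ lam1' lam2' : ℝ, 0 < lam1' → 0 < lam2' → jointG3 lam2 θ1 ≠ jointG1 lam1' lam2') ∧
    jointG2 lam1 θ2 ≠ jointG3 lam2 θ1 := by
  refine ⟨?_, ?_, ?_⟩
  · -- G2 ≠ G1
    intro lam1' lam2' h1' h2' heq
    have h : ∀ j k, pois lam1 j * pois (θ2 j) k = pois lam1' j * pois lam2' k := by
      intro j k
      have := congrFun heq (j, k)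
      simpa [jointG2, jointG1] using this
    have hconst := aux1 hlam1 hθ2 h
    obtain ⟨j, j', hne⟩ := hθ2nc
    exact hne ((hconst j).trans (hconst j').symm)
  · -- G3 ≠ G1
    intro lam1' lam2' h1' h2' heq
    have h : ∀ k j, pois lam2 k * pois (θ1 k) j = pois lam2' k * pois lam1' j := by
      intro k j
      have h0 := congrFun heq (j, k)
      simp only [jointG3, jointG1] at h0
      linear_combination h0
    have hconst := aux1 hlam2 hθ1 h
    obtain ⟨k, k', hne⟩ := hθ1nc
    exact hne ((hconst k).trans (hconst k').symm)
  · -- G2 ≠ G3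
    intro heq
    have E : ∀ j k, pois lam1 j * pois (θ2 j) k = pois (θ1 k) j * pois lam2 k := by
      intro j k
      have := congrFun heq (j, k)
      simpa [jointG2, jointG3] using this
    -- key : pois (θ1 0) j * θ2 j = pois (θ1 1) j * lam2
    have key : ∀ j, pois (θ1 0) j * θ2 j = pois (θ1 1) j * lam2 := by
      intro j
      have h0 := E j 0
      have h1 := E j 1
      rw [pois_one, pois_one] at h1
      have hp0 : (0:ℝ) < pois lam2 0 := pois_pos hlam2 0
      have hthis : pois (θ1 0) j * θ2 j * pois lam2 0 = pois (θ1 1) j * lam2 * pois lam2 0 := by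
        linear_combination h1 - θ2 j * h0
      exact mul_right_cancel₀ (ne_of_gt hp0) hthis
    -- Step 2: 2 * θ2 1 = θ2 0 + θ2 2
    have h00 := E 0 0
    have h10 := E 1 0
    have h20 := E 2 0
    simp only [pois_one, pois_two, pois_zero] at h00 h10 h20
    have hlamne : Real.exp (-lam1) ^ 2 * lam1 ^ 2 ≠ 0 := by positivity
    have hsq : Real.exp (-lam1) ^ 2 * lam1 ^ 2 * (Real.exp (-θ2 1) ^ 2)
        = Real.exp (-lam1) ^ 2 * lam1 ^ 2 * (Real.exp (-θ2 0) * Real.exp (-θ2 2)) := by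
      linear_combination (Real.exp (-lam1) * lam1 * Real.exp (-θ2 1)
          + Real.exp (-(θ1 0)) * θ1 0 * Real.exp (-lam2)) * h10
        - Real.exp (-(θ1 0)) * (θ1 0) ^ 2 * Real.exp (-lam2) * h00
        - 2 * Real.exp (-lam1) * Real.exp (-θ2 0) * h20
    have hsq' : Real.exp (-θ2 1) ^ 2 = Real.exp (-θ2 0) * Real.exp (-θ2 2) :=
      mul_left_cancel₀ hlamne hsq
    have hsum : 2 * θ2 1 = θ2 0 + θ2 2 := by
      have hexp : Real.exp (-θ2 1 + -θ2 1) = Real.exp (-θ2 0 + -θ2 2) := by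
        rw [Real.exp_add, Real.exp_add]
        linear_combination hsq'
      have := Real.exp_eq_exp.mp hexp
      linarith
    -- Step 3: θ2 1 ^ 2 = θ2 0 * θ2 2
    have k0 := key 0
    have k1 := key 1
    have k2 := key 2
    simp only [pois_one, pois_two, pois_zero] at k0 k1 k2
    have hune : Real.exp (-(θ1 0)) ^ 2 * θ1 0 ^ 2 ≠ 0 := by
      have := hθ1 0; positivity
    have hprodm : Real.exp (-(θ1 0)) ^ 2 * θ1 0 ^ 2 * (θ2 1 ^ 2)
        = Real.exp (-(θ1 0)) ^ 2 * θ1 0 ^ 2 * (θ2 0 * θ2 2) := by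
      linear_combination (Real.exp (-(θ1 0)) * θ1 0 * θ2 1
          + Real.exp (-(θ1 1)) * θ1 1 * lam2) * k1
        - Real.exp (-(θ1 1)) * (θ1 1) ^ 2 * lam2 * k0
        - 2 * Real.exp (-(θ1 0)) * θ2 0 * k2
    have hprod : θ2 1 ^ 2 = θ2 0 * θ2 2 := mul_left_cancel₀ hune hprodm
    -- θ2 1 = θ2 0
    have hsq0 : (θ2 1 - θ2 0) ^ 2 = 0 := by
      linear_combination hprod - θ2 0 * hsum
    have h21 : θ2 1 = θ2 0 := by
      have := pow_eq_zero_iff (n := 2) (by norm_num) |>.mp hsq0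
      linarith
    -- θ1 1 = θ1 0
    have hUT : Real.exp (-(θ1 0)) * θ2 0 ≠ 0 := by
      have := hθ2 0; positivity
    have huv : θ1 1 = θ1 0 := by
      have h' : Real.exp (-(θ1 0)) * θ2 0 * θ1 1 = Real.exp (-(θ1 0)) * θ2 0 * θ1 0 := by
        linear_combination θ1 1 * k0 - k1 + θ1 0 * Real.exp (-(θ1 0)) * h21
      exact mul_left_cancel₀ hUT h'
    -- θ2 j = lam2 for all j
    have hconst : ∀ j, θ2 j = lam2 := by
      intro j
      have hk := key j
      rw [huv] at hk
      exact mul_left_cancel₀ (ne_of_gt (pois_pos (hθ1 0) j)) hk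
    obtain ⟨j, j', hne⟩ := hθ2nc
    exact hne ((hconst j).trans (hconst j').symm)
end
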